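/- arXiv:1301.4031 — 2 statements merged into one kernel-verified Lean document; each statement's English description precedes it below -/
import Mathlib

section
/- Let C ⊂ ℝ² be a convex body containing the origin o in its interior, and let r_C denote its radial function (so r_C(u) = max{t > 0 : t·u ∈ C} for unit vectors u). Suppose there exist 2S unit vectors u_1, v_1, u_2, v_2, …, u_S, v_S occurring in this counterclockwise cyclic order on the unit circle such that r_C(v_i) > r_C(u_i) and r_C(v_i) > r_C(u_{i+1}) for every i (indices mod S). Then the function z ↦ |z| restricted to the boundary of C has at least S local minima and at least S local maxima; in particular, C has at least S stable points with respect to o. -/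
open Set MeasureTheory Topology Filter Metric
open scoped RealInnerProductSpace ENNReal

noncomputable section

/-- A convex body in the plane (identified with `ℂ`): a compact convex set with
nonempty interior. -/
def IsConvexBody2 (K : Set ℂ) : Prop :=
  IsCompact K ∧ Convex ℝ K ∧ (interior K).Nonempty

/-- The set of stable points of `K` with respect to `p`: local minima of the distance
to `p` restricted to the boundary of `K`. -/
def stablePts (K : Set ℂ) (p : ℂ) : Set ℂ :=
  {q | q ∈ frontier K ∧ IsLocalMinOn (fun z => dist z p) (frontier K) q}

/-- The set of unstable points of `K` with respect to `p`: local maxima of the distance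
to `p` restricted to the boundary of `K`. -/
def unstablePts (K : Set ℂ) (p : ℂ) : Set ℂ :=
  {q | q ∈ frontier K ∧ IsLocalMaxOn (fun z => dist z p) (frontier K) q}

/-- `K` has exactly `S` stable points with respect to `p`. -/
def HasStable (K : Set ℂ) (p : ℂ) (S : ℕ) : Prop :=
  (stablePts K p).Finite ∧ (stablePts K p).ncard = S

/-- `q` is an equilibrium point of `K` with respect to `p`: the line through `q`
perpendicular to `q - p` supports `K`. -/
def IsEquilib (K : Set ℂ) (p q : ℂ) : Prop :=
  q ∈ frontier K ∧ ∀ z ∈ K, ⟪z - q, q - p⟫ ≤ 0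

/-- All equilibrium points of `K` with respect to `p` are nondegenerate: there are
finitely many of them and each is a strict local extremum of the distance to `p`
on the boundary. -/
def NondegEquilibria (K : Set ℂ) (p : ℂ) : Prop :=
  {q | IsEquilib K p q}.Finite ∧
  ∀ q, IsEquilib K p q →
    (∀ᶠ z in 𝓝[frontier K \ {q}] q, dist q p < dist z p) ∨
    (∀ᶠ z in 𝓝[frontier K \ {q}] q, dist z p < dist q p)

/-- A smooth arc: the image of a compact interval under a regular `C^∞` curve. -/
def IsSmoothArc (A : Set ℂ) : Prop :=
  ∃ γ : ℝ → ℂ, ContDiff ℝ (⊤ : ℕ∞) γ ∧ (∀ t ∈ Icc (0:ℝ) 1, deriv γ t ≠ 0) ∧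
    InjOn γ (Ico (0:ℝ) 1) ∧ A = γ '' Icc (0:ℝ) 1

/-- `K` has piecewise smooth boundary: the boundary is a finite union of smooth arcs. -/
def PiecewiseSmoothBoundary (K : Set ℂ) : Prop :=
  ∃ F : Finset (Set ℂ), (∀ A ∈ F, IsSmoothArc A) ∧ frontier K = ⋃ A ∈ F, A

/-- `K` has smooth (`C^∞`) boundary. -/
def SmoothBoundary2 (K : Set ℂ) : Prop :=
  ∃ f : ℂ → ℝ, ContDiff ℝ (⊤ : ℕ∞) f ∧ K = {x | f x ≤ 0} ∧ ∀ x ∈ frontier K, fderiv ℝ f x ≠ 0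

/-- The downward external robustness of `K` with respect to `p`, where `S` is the number
of stable points of `K` with respect to `p`. -/
def rhoEx (K : Set ℂ) (p : ℂ) (S : ℕ) : ℝ :=
  sInf {x | ∃ K', IsConvexBody2 K' ∧ K' ⊆ K ∧ (stablePts K' p).Finite ∧
      (stablePts K' p).ncard < S ∧ x = (volume (K \ K')).toReal} /
    (volume K).toReal

/-- The perimeter of `K`: the one-dimensional Hausdorff measure of its boundary. -/
def perim (K : Set ℂ) : ℝ := (μH[1] (frontier K)).toReal

/-- The internal robustness of `K` with respect to `p`, where `S` is the number of
stable points of `K` with respect to `p`. -/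
def rhoIn (K : Set ℂ) (p : ℂ) (S : ℕ) : ℝ :=
  sInf {x | ∃ q : ℂ, ¬ HasStable K q S ∧ x = dist q p} / perim K

/-- The centroid (center of gravity) of `K`. -/
def centroid2 (K : Set ℂ) : ℂ := ((volume K).toReal)⁻¹ • ∫ x in K, x

/-- `K` is a regular `S`-gon with center `c`. -/
def IsRegularPolygon2 (K : Set ℂ) (S : ℕ) (c : ℂ) : Prop :=
  ∃ r θ : ℝ, 0 < r ∧
    K = convexHull ℝ
      ((fun k : ℕ => c + (r : ℂ) * Complex.exp
        (((θ + 2 * Real.pi * k / S : ℝ) : ℂ) * Complex.I)) '' Iio S)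

/-- The equilibrium class `{S}`: plane convex bodies with piecewise smooth boundary,
all equilibrium points with respect to the center of gravity nondegenerate, having
exactly `S` stable points with respect to the center of gravity. -/
def InClass2 (K : Set ℂ) (S : ℕ) : Prop :=
  IsConvexBody2 K ∧ PiecewiseSmoothBoundary K ∧ centroid2 K ∈ interior K ∧
  NondegEquilibria K (centroid2 K) ∧ HasStable K (centroid2 K) S

/-- `[x,y]` is a side of the polygon `P`: a nondegenerate exposed segment. -/
def IsSide (P : Set ℂ) (x y : ℂ) : Prop :=
  x ≠ y ∧ IsExposed ℝ P (segment ℝ x y)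

/-- `A` is contained in a closed strip bounded by two parallel lines, one through `x`
and one through `y`. -/
def InStrip (A : Set ℂ) (x y : ℂ) : Prop :=
  ∃ u : ℂ, u ≠ 0 ∧ ∀ z ∈ A, ⟪u, z⟫ ∈ uIcc ⟪u, x⟫ ⟪u, y⟫

/-- `A` admits a strip cover by the sides of the polygon `P`. -/
def StripCovered (A P : Set ℂ) : Prop :=
  ∀ x y : ℂ, IsSide P x y → InStrip A x y

/-- `P` is a convex polygon with exactly `S` vertices. -/
def IsConvexPolygon (P : Set ℂ) (S : ℕ) : Prop :=
  3 ≤ S ∧ ∃ V : Finset ℂ, V.card = S ∧ P = convexHull ℝ (V : Set ℂ) ∧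
    ∀ v ∈ V, v ∉ convexHull ℝ ((V.erase v : Finset ℂ) : Set ℂ)


/-- The radial function of a convex body `C` containing the origin:
`r_C(u) = max{t > 0 : t·u ∈ C}`. -/
def radial (C : Set ℂ) (u : ℂ) : ℝ := sSup {t : ℝ | 0 < t ∧ t • u ∈ C}

namespace RadialAux

/-- unit vector at angle `β` -/
def e (β : ℝ) : ℂ := Complex.exp ((β : ℂ) * Complex.I)

lemma norm_e (β : ℝ) : ‖e β‖ = 1 := Complex.norm_exp_ofReal_mul_I β

lemma e_ne_zero (β : ℝ) : e β ≠ 0 := Complex.exp_ne_zero _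

lemma e_add_int (β : ℝ) (k : ℤ) : e (β + 2 * Real.pi * k) = e β := by
  unfold e
  push_cast
  rw [add_mul, Complex.exp_add]
  have : (2 * (Real.pi : ℂ) * k) * Complex.I = k * (2 * Real.pi * Complex.I) := by ring
  rw [this, Complex.exp_int_mul_two_pi_mul_I, mul_one]

lemma e_add_two_pi (β : ℝ) : e (β + 2 * Real.pi) = e β := by
  have := e_add_int β 1
  simpa using this

variable {C : Set ℂ}

lemma gauge_pos' (hcomp : IsCompact C) (ho : (0:ℂ) ∈ interior C) {z : ℂ} (hz : z ≠ 0) :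
    0 < gauge C z :=
  (gauge_pos (absorbent_nhds_zero (mem_interior_iff_mem_nhds.mp ho))
    ((NormedSpace.isVonNBounded_iff ℝ).mpr hcomp.isBounded)).mpr hz

lemma mem_iff_gauge (hcomp : IsCompact C) (hconv : Convex ℝ C) (ho : (0:ℂ) ∈ interior C)
    {z : ℂ} : z ∈ C ↔ gauge C z ≤ 1 := by
  rw [gauge_le_one_iff_mem_closure hconv (mem_interior_iff_mem_nhds.mp ho),
    hcomp.isClosed.closure_eq]

lemma radial_eq (hcomp : IsCompact C) (hconv : Convex ℝ C) (ho : (0:ℂ) ∈ interior C)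
    {u : ℂ} (hu : u ≠ 0) :
    sSup {t : ℝ | 0 < t ∧ t • u ∈ C} = (gauge C u)⁻¹ := by
  have hg : 0 < gauge C u := gauge_pos' hcomp ho hu
  have hset : {t : ℝ | 0 < t ∧ t • u ∈ C} = Ioc 0 (gauge C u)⁻¹ := by
    ext t
    simp only [mem_setOf_eq, mem_Ioc]
    constructor
    · rintro ⟨ht, htC⟩
      refine ⟨ht, ?_⟩
      have h1 : gauge C (t • u) ≤ 1 := (mem_iff_gauge hcomp hconv ho).mp htC
      rw [gauge_smul_of_nonneg ht.le, smul_eq_mul] at h1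
      rw [show (gauge C u)⁻¹ = 1 / gauge C u by rw [one_div], le_div_iff₀ hg]
      linarith [h1]
    · rintro ⟨ht, htle⟩
      refine ⟨ht, ?_⟩
      rw [mem_iff_gauge hcomp hconv ho, gauge_smul_of_nonneg ht.le, smul_eq_mul]
      calc t * gauge C u ≤ (gauge C u)⁻¹ * gauge C u := by
            exact mul_le_mul_of_nonneg_right htle hg.le
        _ = 1 := inv_mul_cancel₀ hg.ne'
  rw [hset]
  exact csSup_Ioc (inv_pos.mpr hg)


/-- the boundary point at angle `α` -/
def pt (C : Set ℂ) (α : ℝ) : ℂ := (gauge C (e α))⁻¹ • e α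

lemma gauge_pt (hcomp : IsCompact C) (ho : (0:ℂ) ∈ interior C) (α : ℝ) :
    gauge C (pt C α) = 1 := by
  have hg := gauge_pos' hcomp ho (e_ne_zero α)
  rw [pt, gauge_smul_of_nonneg (inv_nonneg.mpr hg.le), smul_eq_mul, inv_mul_cancel₀ hg.ne']

lemma pt_mem_frontier (hcomp : IsCompact C) (hconv : Convex ℝ C)
    (ho : (0:ℂ) ∈ interior C) (α : ℝ) : pt C α ∈ frontier C :=
  (gauge_eq_one_iff_mem_frontier hconv (mem_interior_iff_mem_nhds.mp ho)).mp
    (gauge_pt hcomp ho α)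

lemma norm_pt (hcomp : IsCompact C) (ho : (0:ℂ) ∈ interior C) (α : ℝ) :
    ‖pt C α‖ = (gauge C (e α))⁻¹ := by
  have hg := gauge_pos' hcomp ho (e_ne_zero α)
  rw [pt, norm_smul, norm_e, mul_one, Real.norm_eq_abs, abs_of_pos (inv_pos.mpr hg)]

lemma eventually_angle (hcomp : IsCompact C) (hconv : Convex ℝ C)
    (ho : (0:ℂ) ∈ interior C) {a b α : ℝ} (ha : a < α) (hb : α < b) :
    ∀ᶠ z in 𝓝[frontier C] (pt C α), ∃ β ∈ Icc a b, ‖z‖ = (gauge C (e β))⁻¹ := by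
  have hg : ∀ β : ℝ, 0 < gauge C (e β) := fun β => gauge_pos' hcomp ho (e_ne_zero β)
  set δ : ℝ := min (min (α - a) (b - α)) Real.pi with hδdef
  have hπ : 0 < Real.pi := Real.pi_pos
  have hδpos : 0 < δ := by
    simp only [hδdef, lt_min_iff]
    exact ⟨⟨by linarith, by linarith⟩, hπ⟩
  have hδπ : δ ≤ Real.pi := min_le_right _ _
  have hδa : δ ≤ α - a := (min_le_left _ _).trans (min_le_left _ _)
  have hδb : δ ≤ b - α := (min_le_left _ _).trans (min_le_right _ _)
  set U : Set ℂ := {z | Real.cos δ * ‖z‖ < (z * (starRingEnd ℂ) (e α)).re} with hUdef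
  have hUopen : IsOpen U := by
    apply isOpen_lt
    · exact continuous_const.mul continuous_norm
    · exact Complex.continuous_re.comp (continuous_id.mul continuous_const)
  have hz₀U : pt C α ∈ U := by
    have hcosδ : Real.cos δ < 1 := by
      have := Real.cos_lt_cos_of_nonneg_of_le_pi le_rfl hδπ hδpos
      simpa using this
    have hmc : (e α) * (starRingEnd ℂ) (e α) = 1 := by
      rw [Complex.mul_conj]
      norm_cast
      rw [Complex.normSq_eq_norm_sq]
      have : ‖e α‖ = 1 := norm_e α
      rw [this]; norm_num
    have : (pt C α * (starRingEnd ℂ) (e α)).re = (gauge C (e α))⁻¹ := by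
      rw [pt, smul_mul_assoc, hmc]
      simp
    rw [hUdef, mem_setOf_eq, this, norm_pt hcomp ho]
    have hpos : 0 < (gauge C (e α))⁻¹ := inv_pos.mpr (hg α)
    nlinarith
  have hU : U ∈ 𝓝[frontier C] (pt C α) :=
    mem_nhdsWithin_of_mem_nhds (hUopen.mem_nhds hz₀U)
  filter_upwards [hU, self_mem_nhdsWithin] with z hzU hzF
  -- z ≠ 0
  have hz0 : z ≠ 0 := by
    rintro rfl
    simp only [hUdef, mem_setOf_eq, norm_zero, mul_zero, zero_mul, Complex.zero_re] at hzU
    exact lt_irrefl _ hzU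
  have hgz : gauge C z = 1 :=
    (gauge_eq_one_iff_mem_frontier hconv (mem_interior_iff_mem_nhds.mp ho)).mpr hzF
  set γ : ℝ := Complex.arg z with hγ
  have hzeq : z = ‖z‖ • e γ := by
    conv_lhs => rw [← Complex.norm_mul_exp_arg_mul_I z]
    rw [Complex.real_smul, e]
  have hnorm : ‖z‖ = (gauge C (e γ))⁻¹ := by
    have h1 : ‖z‖ * gauge C (e γ) = 1 := by
      have h2 := gauge_smul_of_nonneg (s := C) (norm_nonneg z) (e γ)
      rw [← hzeq, hgz, smul_eq_mul] at h2
      linarith [h2]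
    exact eq_inv_of_mul_eq_one_left (by linear_combination h1)
  -- the angle inequality
  have hcos : Real.cos δ < Real.cos (γ - α) := by
    have hconj : (starRingEnd ℂ) (e α) = e (-α) := by
      rw [e, e, ← Complex.exp_conj]
      congr 1
      simp [Complex.conj_ofReal]
    have hme : e γ * e (-α) = e (γ - α) := by
      rw [e, e, e, ← Complex.exp_add]
      congr 1
      push_cast
      ring
    have hre : (e (γ - α)).re = Real.cos (γ - α) := Complex.exp_ofReal_mul_I_re _
    have hmul : (z * (starRingEnd ℂ) (e α)).re = ‖z‖ * Real.cos (γ - α) := by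
      conv_lhs => rw [hzeq]
      rw [smul_mul_assoc, hconj, hme, Complex.real_smul, Complex.mul_re]
      simp only [Complex.ofReal_re, Complex.ofReal_im, zero_mul, sub_zero]
      rw [hre]
    rw [hUdef, mem_setOf_eq, hmul] at hzU
    have hznorm : 0 < ‖z‖ := norm_pos_iff.mpr hz0
    exact lt_of_mul_lt_mul_right (by linarith [hzU]) hznorm.le
  -- reduce mod 2π
  set s : ℝ := toIocMod Real.two_pi_pos (-Real.pi) (γ - α) with hs
  obtain ⟨hs1, hs2⟩ := toIocMod_mem_Ioc Real.two_pi_pos (-Real.pi) (γ - α)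
  have hs2' : s ≤ Real.pi := by rw [hs]; linarith [hs2]
  obtain ⟨k, hk⟩ : ∃ k : ℤ, (γ - α) - s = k • (2 * Real.pi) :=
    ⟨toIocDiv Real.two_pi_pos (-Real.pi) (γ - α), (self_sub_toIocMod _ _ _)⟩
  have hcs : Real.cos s = Real.cos (γ - α) := by
    have : s = (γ - α) - k * (2 * Real.pi) := by
      rw [zsmul_eq_mul] at hk; linarith [hk]
    rw [this, Real.cos_sub_int_mul_two_pi]
  have habs : |s| < δ := by
    by_contra hcon
    push_neg at hcon
    have habspi : |s| ≤ Real.pi := abs_le.mpr ⟨by linarith, hs2'⟩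
    have : Real.cos |s| ≤ Real.cos δ :=
      Real.cos_le_cos_of_nonneg_of_le_pi hδpos.le habspi hcon
    rw [Real.cos_abs, hcs] at this
    linarith [hcos]
  rw [abs_lt] at habs
  refine ⟨α + s, ⟨by linarith [habs.1], by linarith [habs.2]⟩, ?_⟩
  have heq : e γ = e (α + s) := by
    have : γ = (α + s) + 2 * Real.pi * k := by
      rw [zsmul_eq_mul] at hk; linarith [hk]
    rw [this, e_add_int]
  rw [hnorm, heq]

lemma stable_of_max (hcomp : IsCompact C) (hconv : Convex ℝ C)
    (ho : (0:ℂ) ∈ interior C) {a b α : ℝ} (ha : a < α) (hb : α < b)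
    (hmax : ∀ β ∈ Icc a b, gauge C (e β) ≤ gauge C (e α)) :
    pt C α ∈ frontier C ∧ IsLocalMinOn (fun z => dist z (0:ℂ)) (frontier C) (pt C α) := by
  have hg : ∀ β : ℝ, 0 < gauge C (e β) := fun β => gauge_pos' hcomp ho (e_ne_zero β)
  refine ⟨pt_mem_frontier hcomp hconv ho α, ?_⟩
  have hev := eventually_angle hcomp hconv ho ha hb
  refine Filter.Eventually.mono hev ?_
  rintro z ⟨β, hβ, hzn⟩
  simp only [dist_zero_right]
  rw [norm_pt hcomp ho, hzn]
  exact inv_anti₀ (hg β) (hmax β hβ)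

lemma unstable_of_min (hcomp : IsCompact C) (hconv : Convex ℝ C)
    (ho : (0:ℂ) ∈ interior C) {a b α : ℝ} (ha : a < α) (hb : α < b)
    (hmin : ∀ β ∈ Icc a b, gauge C (e α) ≤ gauge C (e β)) :
    pt C α ∈ frontier C ∧ IsLocalMaxOn (fun z => dist z (0:ℂ)) (frontier C) (pt C α) := by
  have hg : ∀ β : ℝ, 0 < gauge C (e β) := fun β => gauge_pos' hcomp ho (e_ne_zero β)
  refine ⟨pt_mem_frontier hcomp hconv ho α, ?_⟩
  have hev := eventually_angle hcomp hconv ho ha hb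
  refine Filter.Eventually.mono hev ?_
  rintro z ⟨β, hβ, hzn⟩
  simp only [dist_zero_right]
  rw [norm_pt hcomp ho, hzn]
  exact inv_anti₀ (hg α) (hmin β hβ)

lemma pt_inj (hcomp : IsCompact C) (ho : (0:ℂ) ∈ interior C) {x y : ℝ}
    (hxy : |x - y| < 2 * Real.pi) (h : pt C x = pt C y) : x = y := by
  have hgx := gauge_pos' hcomp ho (e_ne_zero x)
  have hnorm : (gauge C (e x))⁻¹ = (gauge C (e y))⁻¹ := by
    rw [← norm_pt hcomp ho, ← norm_pt hcomp ho, h]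
  rw [pt, pt, ← hnorm] at h
  have hee : e x = e y := smul_right_injective ℂ (by positivity) h
  rw [e, e, Complex.exp_eq_exp_iff_exists_int] at hee
  obtain ⟨n, hn⟩ := hee
  have him : x = y + n * (2 * Real.pi) := by
    have := congrArg Complex.im hn
    simpa using this
  have : x - y = n * (2 * Real.pi) := by linarith
  rw [this] at hxy
  have hn0 : n = 0 := by
    by_contra hne
    have : (1:ℝ) ≤ |(n:ℝ)| := by
      rw [← Int.cast_abs]
      exact_mod_cast Int.one_le_abs (by exact_mod_cast hne)
    rw [abs_mul, abs_of_pos Real.two_pi_pos] at hxy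
    nlinarith [Real.two_pi_pos]
  rw [hn0] at him
  simpa using him

end RadialAux

/-- If there are `2S` unit vectors `u₁, v₁, …, u_S, v_S` in
counterclockwise cyclic order with `r_C(vᵢ) > r_C(uᵢ)` and `r_C(vᵢ) > r_C(u_{i+1})`
(cyclically), then the norm restricted to the boundary of `C` has at least `S` local
minima and at least `S` local maxima; in particular, `C` has at least `S` stable
points with respect to the origin. -/
theorem radial_alternation (C : Set ℂ) (S : ℕ) (hS : 1 ≤ S)
    (hC : IsConvexBody2 C) (ho : (0:ℂ) ∈ interior C)
    (u v : Fin S → ℂ) (θ φ : Fin S → ℝ)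
    (hu : ∀ i, u i = Complex.exp ((θ i : ℂ) * Complex.I))
    (hv : ∀ i, v i = Complex.exp ((φ i : ℂ) * Complex.I))
    (h1 : ∀ i, θ i < φ i)
    (h2 : ∀ i j : Fin S, i < j → φ i < θ j)
    (h3 : ∀ i, φ i < θ ⟨0, by omega⟩ + 2 * Real.pi)
    (hrad : ∀ i : Fin S, radial C (u i) < radial C (v i) ∧
      radial C (u ⟨(i.val + 1) % S, Nat.mod_lt _ (by omega)⟩) < radial C (v i)) :
    (∃ T : Finset ℂ, S ≤ T.card ∧ (T : Set ℂ) ⊆ stablePts C 0) ∧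
    (∃ T : Finset ℂ, S ≤ T.card ∧ (T : Set ℂ) ⊆ unstablePts C 0) := by
  classical
  obtain ⟨hcomp, hconv, -⟩ := hC
  have hπ := Real.pi_pos
  have hS0 : 0 < S := hS
  have hgpos : ∀ β : ℝ, 0 < gauge C (RadialAux.e β) :=
    fun β => RadialAux.gauge_pos' hcomp ho (RadialAux.e_ne_zero β)
  set f : ℝ → ℝ := fun β => gauge C (RadialAux.e β) with hf
  have hfcont : Continuous f := by
    apply (continuous_gauge hconv (mem_interior_iff_mem_nhds.mp ho)).comp
    exact Complex.continuous_exp.comp ((Complex.continuous_ofReal).mul continuous_const)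
  have hfper : ∀ x : ℝ, f (x + 2 * Real.pi) = f x := fun x => by
    simp only [hf]; rw [RadialAux.e_add_two_pi]
  have hradial : ∀ β : ℝ, radial C (RadialAux.e β) = (f β)⁻¹ :=
    fun β => RadialAux.radial_eq hcomp hconv ho (RadialAux.e_ne_zero β)
  set i0 : Fin S := ⟨0, hS0⟩ with hi0
  have hflt : ∀ x y : ℝ, radial C (RadialAux.e x) < radial C (RadialAux.e y) → f y < f x := by
    intro x y h
    rw [hradial, hradial] at h
    exact (inv_lt_inv₀ (hgpos x) (hgpos y)).mp h
  have hu' : ∀ i, u i = RadialAux.e (θ i) := hu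
  have hv' : ∀ i, v i = RadialAux.e (φ i) := hv
  -- translated radial hypotheses
  have G1 : ∀ i : Fin S, f (φ i) < f (θ i) := by
    intro i
    have h := (hrad i).1
    rw [hu' i, hv' i] at h
    exact hflt _ _ h
  have G2' : ∀ i : Fin S, f (φ i) < f (θ ⟨(i.val + 1) % S, Nat.mod_lt _ hS0⟩) := by
    intro i
    have h := (hrad i).2
    rw [hu' _, hv' i] at h
    exact hflt _ _ h
  -- successor angle functions
  set θ' : Fin S → ℝ := fun i =>
    if h : i.val + 1 < S then θ ⟨i.val + 1, h⟩ else θ i0 + 2 * Real.pi with hθ'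
  set φ' : Fin S → ℝ := fun i =>
    if h : i.val + 1 < S then φ ⟨i.val + 1, h⟩ else φ i0 + 2 * Real.pi with hφ'
  have hsucc : ∀ i : Fin S, ¬ (i.val + 1 < S) → (⟨(i.val + 1) % S, Nat.mod_lt _ hS0⟩ : Fin S) = i0 := by
    intro i h
    have : i.val + 1 = S := by omega
    apply Fin.ext
    simp [this, hi0]
  have hsucc' : ∀ i : Fin S, (h : i.val + 1 < S) →
      (⟨(i.val + 1) % S, Nat.mod_lt _ hS0⟩ : Fin S) = ⟨i.val + 1, h⟩ := by
    intro i h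
    apply Fin.ext
    simp [Nat.mod_eq_of_lt h]
  have F1 : ∀ i : Fin S, f (θ' i) = f (θ ⟨(i.val + 1) % S, Nat.mod_lt _ hS0⟩) := by
    intro i
    by_cases h : i.val + 1 < S
    · rw [hsucc' i h]; simp only [hθ', dif_pos h]
    · rw [hsucc i h]; simp only [hθ', dif_neg h]; exact hfper _
  have F4 : ∀ i : Fin S, f (φ' i) = f (φ ⟨(i.val + 1) % S, Nat.mod_lt _ hS0⟩) := by
    intro i
    by_cases h : i.val + 1 < S
    · rw [hsucc' i h]; simp only [hφ', dif_pos h]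
    · rw [hsucc i h]; simp only [hφ', dif_neg h]; exact hfper _
  have F2 : ∀ i : Fin S, φ i < θ' i := by
    intro i
    by_cases h : i.val + 1 < S
    · simp only [hθ', dif_pos h]
      exact h2 i ⟨i.val + 1, h⟩ (by simp [Fin.lt_def])
    · simp only [hθ', dif_neg h]
      exact h3 i
  have F3 : ∀ i : Fin S, θ' i < φ' i := by
    intro i
    by_cases h : i.val + 1 < S
    · simp only [hθ', hφ', dif_pos h]
      exact h1 _
    · simp only [hθ', hφ', dif_neg h]
      linarith [h1 i0]
  have F5 : ∀ i : Fin S, θ i0 ≤ θ i := by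
    intro i
    rcases eq_or_lt_of_le (Nat.zero_le i.val) with h | h
    · have : i0 = i := Fin.ext h
      rw [this]
    · have : i0 < i := by simp [Fin.lt_def, hi0]; omega
      linarith [h1 i0, h2 i0 i this]
  have F7 : ∀ i : Fin S, φ i0 ≤ φ i := by
    intro i
    rcases eq_or_lt_of_le (Nat.zero_le i.val) with h | h
    · have : i0 = i := Fin.ext h
      rw [this]
    · have hlt : i0 < i := by simp [Fin.lt_def, hi0]; omega
      linarith [h2 i0 i hlt, h1 i]
  have F6 : ∀ i : Fin S, θ' i ≤ θ i0 + 2 * Real.pi := by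
    intro i
    by_cases h : i.val + 1 < S
    · simp only [hθ', dif_pos h]
      have := h1 (⟨i.val + 1, h⟩ : Fin S)
      have := h3 (⟨i.val + 1, h⟩ : Fin S)
      linarith
    · simp only [hθ', dif_neg h]
      exact le_rfl
  have F8 : ∀ i : Fin S, φ' i ≤ φ i0 + 2 * Real.pi := by
    intro i
    by_cases h : i.val + 1 < S
    · simp only [hφ', dif_pos h]
      have := h3 (⟨i.val + 1, h⟩ : Fin S)
      have := h1 i0
      linarith
    · simp only [hφ', dif_neg h]
      exact le_rfl
  have F9 : ∀ i j : Fin S, i < j → θ' i ≤ θ j := by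
    intro i j hij
    have hij' : i.val + 1 ≤ j.val := hij
    have h : i.val + 1 < S := lt_of_le_of_lt hij' j.isLt
    simp only [hθ', dif_pos h]
    rcases eq_or_lt_of_le hij' with he | hlt
    · have : (⟨i.val + 1, h⟩ : Fin S) = j := Fin.ext he
      rw [this]
    · have hlt' : (⟨i.val + 1, h⟩ : Fin S) < j := hlt
      linarith [h1 (⟨i.val + 1, h⟩ : Fin S), h2 (⟨i.val + 1, h⟩ : Fin S) j hlt']
  have F10 : ∀ i j : Fin S, i < j → φ' i ≤ φ j := by
    intro i j hij
    have hij' : i.val + 1 ≤ j.val := hij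
    have h : i.val + 1 < S := lt_of_le_of_lt hij' j.isLt
    simp only [hφ', dif_pos h]
    rcases eq_or_lt_of_le hij' with he | hlt
    · have : (⟨i.val + 1, h⟩ : Fin S) = j := Fin.ext he
      rw [this]
    · have hlt' : (⟨i.val + 1, h⟩ : Fin S) < j := hlt
      linarith [h2 (⟨i.val + 1, h⟩ : Fin S) j hlt', h1 j]
  have G2 : ∀ i : Fin S, f (φ i) < f (θ' i) := fun i => (F1 i) ▸ (G2' i)
  have G3 : ∀ i : Fin S, f (φ' i) < f (θ' i) := by
    intro i
    rw [F1 i, F4 i]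
    exact G1 _
  constructor
  · -- stable points: maxima of f on [φ i, φ' i]
    have hmax : ∀ i : Fin S, ∃ α : ℝ, φ i < α ∧ α < φ' i ∧
        ∀ β ∈ Icc (φ i) (φ' i), f β ≤ f α := by
      intro i
      have hab : φ i < φ' i := (F2 i).trans (F3 i)
      obtain ⟨α, hαmem, hαmax⟩ :=
        isCompact_Icc.exists_isMaxOn (nonempty_Icc.mpr hab.le) hfcont.continuousOn
      have hαmax' : ∀ β ∈ Icc (φ i) (φ' i), f β ≤ f α := fun β hβ => hαmax hβ
      have hmem' : θ' i ∈ Icc (φ i) (φ' i) := ⟨(F2 i).le, (F3 i).le⟩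
      have hge : f (θ' i) ≤ f α := hαmax' _ hmem'
      refine ⟨α, ?_, ?_, hαmax'⟩
      · rcases eq_or_lt_of_le hαmem.1 with he | h
        · exfalso; rw [← he] at hge; linarith [G2 i]
        · exact h
      · rcases eq_or_lt_of_le hαmem.2 with he | h
        · exfalso; rw [he] at hge; linarith [G3 i]
        · exact h
    choose α hα1 hα2 hα3 using hmax
    have hwin : ∀ i : Fin S, φ i0 < α i ∧ α i < φ i0 + 2 * Real.pi := fun i =>
      ⟨lt_of_le_of_lt (F7 i) (hα1 i), lt_of_lt_of_le (hα2 i) (F8 i)⟩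
    have hmono : StrictMono α := by
      intro i j hij
      calc α i < φ' i := hα2 i
        _ ≤ φ j := F10 i j hij
        _ < α j := hα1 j
    have hinj : Function.Injective (fun i => RadialAux.pt C (α i)) := by
      intro i j hij
      have habs : |α i - α j| < 2 * Real.pi := by
        rw [abs_sub_lt_iff]
        constructor <;> linarith [(hwin i).1, (hwin i).2, (hwin j).1, (hwin j).2]
      have := RadialAux.pt_inj hcomp ho habs hij
      exact hmono.injective this
    refine ⟨Finset.image (fun i => RadialAux.pt C (α i)) Finset.univ, ?_, ?_⟩
    · rw [Finset.card_image_of_injective _ hinj, Finset.card_univ, Fintype.card_fin]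
    · intro z hz
      simp only [Finset.coe_image, Finset.coe_univ, Set.image_univ, Set.mem_range] at hz
      obtain ⟨i, rfl⟩ := hz
      exact RadialAux.stable_of_max hcomp hconv ho (hα1 i) (hα2 i) (hα3 i)
  · -- unstable points: minima of f on [θ i, θ' i]
    have hmin : ∀ i : Fin S, ∃ α : ℝ, θ i < α ∧ α < θ' i ∧
        ∀ β ∈ Icc (θ i) (θ' i), f α ≤ f β := by
      intro i
      have hab : θ i < θ' i := (h1 i).trans (F2 i)
      obtain ⟨α, hαmem, hαmin⟩ :=
        isCompact_Icc.exists_isMinOn (nonempty_Icc.mpr hab.le) hfcont.continuousOn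
      have hαmin' : ∀ β ∈ Icc (θ i) (θ' i), f α ≤ f β := fun β hβ => hαmin hβ
      have hmem' : φ i ∈ Icc (θ i) (θ' i) := ⟨(h1 i).le, (F2 i).le⟩
      have hle : f α ≤ f (φ i) := hαmin' _ hmem'
      refine ⟨α, ?_, ?_, hαmin'⟩
      · rcases eq_or_lt_of_le hαmem.1 with he | h
        · exfalso; rw [← he] at hle; linarith [G1 i]
        · exact h
      · rcases eq_or_lt_of_le hαmem.2 with he | h
        · exfalso; rw [he] at hle; linarith [G2 i]
        · exact h
    choose α hα1 hα2 hα3 using hmin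
    have hwin : ∀ i : Fin S, θ i0 < α i ∧ α i < θ i0 + 2 * Real.pi := fun i =>
      ⟨lt_of_le_of_lt (F5 i) (hα1 i), lt_of_lt_of_le (hα2 i) (F6 i)⟩
    have hmono : StrictMono α := by
      intro i j hij
      calc α i < θ' i := hα2 i
        _ ≤ θ j := F9 i j hij
        _ < α j := hα1 j
    have hinj : Function.Injective (fun i => RadialAux.pt C (α i)) := by
      intro i j hij
      have habs : |α i - α j| < 2 * Real.pi := by
        rw [abs_sub_lt_iff]
        constructor <;> linarith [(hwin i).1, (hwin i).2, (hwin j).1, (hwin j).2]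
      have := RadialAux.pt_inj hcomp ho habs hij
      exact hmono.injective this
    refine ⟨Finset.image (fun i => RadialAux.pt C (α i)) Finset.univ, ?_, ?_⟩
    · rw [Finset.card_image_of_injective _ hinj, Finset.card_univ, Fintype.card_fin]
    · intro z hz
      simp only [Finset.coe_image, Finset.coe_univ, Set.image_univ, Set.mem_range] at hz
      obtain ⟨i, rfl⟩ := hz
      exact RadialAux.unstable_of_min hcomp hconv ho (hα1 i) (hα2 i) (hα3 i)


end
end

section
/- Let K ⊂ ℝ³ be a convex body with center of gravity G, and let u be a unit vector. Set M = max{⟨x,u⟩ : x ∈ K} and m = min{⟨x,u⟩ : x ∈ K}. Then M − ⟨G,u⟩ ≥ (M − m)/4 and ⟨G,u⟩ − m ≥ (M − m)/4; that is, the distance of the center of gravity of K from each of the two supporting planes of K orthogonal to u is at least one quarter of the width of K in the direction u. -/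
open Set MeasureTheory Topology Filter Metric
open scoped RealInnerProductSpace ENNReal

noncomputable section

/-- Three-dimensional Euclidean space. -/
abbrev E3 := EuclideanSpace ℝ (Fin 3)

/-- A convex body in `ℝ³`: a compact convex set with nonempty interior. -/
def IsConvexBody3 (K : Set E3) : Prop :=
  IsCompact K ∧ Convex ℝ K ∧ (interior K).Nonempty

/-- Stable points of `K` with respect to `p`. -/
def stablePts3 (K : Set E3) (p : E3) : Set E3 :=
  {q | q ∈ frontier K ∧ IsLocalMinOn (fun z => dist z p) (frontier K) q}

/-- Unstable points of `K` with respect to `p`. -/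
def unstablePts3 (K : Set E3) (p : E3) : Set E3 :=
  {q | q ∈ frontier K ∧ IsLocalMaxOn (fun z => dist z p) (frontier K) q}

/-- `q` is an equilibrium point of `K` with respect to `p`: the plane through `q`
perpendicular to `q - p` supports `K`. -/
def IsEquilib3 (K : Set E3) (p q : E3) : Prop :=
  q ∈ frontier K ∧ ∀ z ∈ K, ⟪z - q, q - p⟫ ≤ 0

/-- The set of equilibrium points of `K` with respect to `p`. -/
def equilibPts3 (K : Set E3) (p : E3) : Set E3 := {q | IsEquilib3 K p q}

/-- The centroid (center of gravity) of `K`. -/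
def centroid3 (K : Set E3) : E3 := ((volume K).toReal)⁻¹ • ∫ x in K, x

/-- `K` has smooth (`C^∞`) boundary. -/
def SmoothBoundary3 (K : Set E3) : Prop :=
  ∃ f : E3 → ℝ, ContDiff ℝ (⊤ : ℕ∞) f ∧ K = {x | f x ≤ 0} ∧ ∀ x ∈ frontier K, fderiv ℝ f x ≠ 0

/-- `K` is a convex polytope. -/
def IsPolytope3 (K : Set E3) : Prop := ∃ V : Finset E3, K = convexHull ℝ (V : Set E3)

/-- All equilibrium points of `K` with respect to `p` are nondegenerate: there are
finitely many, and stable (resp. unstable) points are strict local minima (resp.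
maxima) of the distance to `p` on the boundary. -/
def NondegEquilibria3 (K : Set E3) (p : E3) : Prop :=
  (equilibPts3 K p).Finite ∧
  (∀ q ∈ stablePts3 K p, ∀ᶠ z in 𝓝[frontier K \ {q}] q, dist q p < dist z p) ∧
  (∀ q ∈ unstablePts3 K p, ∀ᶠ z in 𝓝[frontier K \ {q}] q, dist z p < dist q p)

/-- The equilibrium class `{S,U}` of convex bodies in `ℝ³`. -/
def InClass3 (K : Set E3) (S U : ℕ) : Prop :=
  IsConvexBody3 K ∧ (SmoothBoundary3 K ∨ IsPolytope3 K) ∧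
  centroid3 K ∈ interior K ∧ NondegEquilibria3 K (centroid3 K) ∧
  (stablePts3 K (centroid3 K)).Finite ∧ (stablePts3 K (centroid3 K)).ncard = S ∧
  (unstablePts3 K (centroid3 K)).Finite ∧ (unstablePts3 K (centroid3 K)).ncard = U

/-- The downward robustness of `K`: the minimal relative volume of a truncation
having strictly fewer equilibrium points with respect to its own center of gravity. -/
def rho3 (K : Set E3) : ℝ :=
  sInf {x | ∃ K', IsConvexBody3 K' ∧ K' ⊆ K ∧
      (equilibPts3 K' (centroid3 K')).Finite ∧
      (equilibPts3 K' (centroid3 K')).ncard < (equilibPts3 K (centroid3 K)).ncard ∧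
      x = (volume (K \ K')).toReal} / (volume K).toReal

/-- The partial S-robustness of `K`. -/
def rhoS3 (K : Set E3) : ℝ :=
  sInf {x | ∃ K', IsConvexBody3 K' ∧ K' ⊆ K ∧
      (stablePts3 K' (centroid3 K')).Finite ∧
      (stablePts3 K' (centroid3 K')).ncard < (stablePts3 K (centroid3 K)).ncard ∧
      x = (volume (K \ K')).toReal} / (volume K).toReal

/-- The partial U-robustness of `K`. -/
def rhoU3 (K : Set E3) : ℝ :=
  sInf {x | ∃ K', IsConvexBody3 K' ∧ K' ⊆ K ∧
      (unstablePts3 K' (centroid3 K')).Finite ∧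
      (unstablePts3 K' (centroid3 K')).ncard < (unstablePts3 K (centroid3 K)).ncard ∧
      x = (volume (K \ K')).toReal} / (volume K).toReal

/-- `ρ_{S,U}`: the supremum of the downward robustness over the class `{S,U}`. -/
def rhoClass (S U : ℕ) : ℝ := sSup {x | ∃ K, InClass3 K S U ∧ x = rho3 K}

/-- `ρ^s_{S,U}`. -/
def rhoSClass (S U : ℕ) : ℝ := sSup {x | ∃ K, InClass3 K S U ∧ x = rhoS3 K}

/-- `ρ^u_{S,U}`. -/
def rhoUClass (S U : ℕ) : ℝ := sSup {x | ∃ K, InClass3 K S U ∧ x = rhoU3 K}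

/-- `B` is a bounding box of `K` with edge lengths `a`, `b`, `c`: a brick
circumscribed about `K` (it contains `K` and each of its six faces meets `K`). -/
def IsBoundingBox (K B : Set E3) (a b c : ℝ) : Prop :=
  K ⊆ B ∧ ∃ g : E3 ≃ᵃⁱ[ℝ] E3,
    g '' B = {x : E3 | x 0 ∈ Icc (0:ℝ) a ∧ x 1 ∈ Icc (0:ℝ) b ∧ x 2 ∈ Icc (0:ℝ) c} ∧
    (∃ x ∈ g '' K, x 0 = 0) ∧ (∃ x ∈ g '' K, x 0 = a) ∧
    (∃ x ∈ g '' K, x 1 = 0) ∧ (∃ x ∈ g '' K, x 1 = b) ∧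
    (∃ x ∈ g '' K, x 2 = 0) ∧ (∃ x ∈ g '' K, x 2 = c)

/-- `F` is a nonempty proper exposed face of `P` of dimension `d`. -/
def IsFaceDim (P F : Set E3) (d : ℕ) : Prop :=
  IsExposed ℝ P F ∧ F.Nonempty ∧ F ≠ P ∧
    Module.finrank ℝ (affineSpan ℝ F).direction = d

/-- A flag of the polyhedron `P`: an incident vertex–edge–face triple. -/
def IsFlag3 (P : Set E3) (v : E3) (e f : Set E3) : Prop :=
  IsFaceDim P {v} 0 ∧ IsFaceDim P e 1 ∧ IsFaceDim P f 2 ∧ v ∈ e ∧ e ⊆ f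

/-- `P` is a regular polyhedron (Platonic solid): a convex polyhedron whose isometry
group acts transitively on its flags. -/
def IsRegularPolyhedron (P : Set E3) : Prop :=
  IsPolytope3 P ∧ IsConvexBody3 P ∧
  ∀ v e f v' e' f', IsFlag3 P v e f → IsFlag3 P v' e' f' →
    ∃ g : E3 ≃ᵃⁱ[ℝ] E3, g '' P = P ∧ g v = v' ∧ g '' e = e' ∧ g '' f = f'

/-- The surface area of `K`: the two-dimensional Hausdorff measure of its boundary. -/
def surf3 (K : Set E3) : ℝ := (μH[2] (frontier K)).toReal

/-- `K` has exactly `S` stable points with respect to `p`. -/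
def HasStable3 (K : Set E3) (p : E3) (S : ℕ) : Prop :=
  (stablePts3 K p).Finite ∧ (stablePts3 K p).ncard = S

/-- The internal robustness of `K` with respect to `p` (normalized by the square root
of the surface area), where the number of stable points of `K` with respect to `p`
is `(stablePts3 K p).ncard`. -/
def rhoIn3 (K : Set E3) (p : E3) : ℝ :=
  sInf {x | ∃ q : E3, ¬ HasStable3 K q ((stablePts3 K p).ncard) ∧ x = dist q p} /
    Real.sqrt (surf3 K)


-- hyperplane is null
lemma hyperplane_null (u : E3) (hu : u ≠ 0) (c : ℝ) :
    volume {a : E3 | ⟪a, u⟫ = c} = 0 := by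
  set f : E3 →ₗ[ℝ] ℝ := (innerSL ℝ u).toLinearMap with hf
  set s : AffineSubspace ℝ E3 :=
    AffineSubspace.mk' ((c / ⟪u, u⟫) • u) (LinearMap.ker f) with hs
  have hker : LinearMap.ker f ≠ ⊤ := by
    intro h
    have : u ∈ LinearMap.ker f := h ▸ Submodule.mem_top
    rw [LinearMap.mem_ker] at this
    simp only [hf, ContinuousLinearMap.coe_coe, innerSL_apply_apply] at this
    exact hu (inner_self_eq_zero.mp this)
  have hsne : s ≠ ⊤ := by
    intro h
    apply hker
    have := AffineSubspace.direction_mk' ((c / ⟪u, u⟫) • u) (LinearMap.ker f)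
    rw [← hs, h, AffineSubspace.direction_top] at this
    exact this.symm
  have huu : ⟪u, u⟫ ≠ 0 := fun h => hu (inner_self_eq_zero.mp h)
  have hset : {a : E3 | ⟪a, u⟫ = c} = (s : Set E3) := by
    ext a
    simp only [mem_setOf_eq, hs, SetLike.mem_coe, AffineSubspace.mem_mk',
      LinearMap.mem_ker, vsub_eq_sub, hf, ContinuousLinearMap.coe_coe, innerSL_apply_apply]
    rw [inner_sub_right, inner_smul_right, div_mul_cancel₀ _ huu, real_inner_comm u a,
      sub_eq_zero]
  rw [hset]
  exact MeasureTheory.Measure.addHaar_affineSubspace volume s hsne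


set_option maxHeartbeats 1000000 in
lemma aux_lower (K : Set E3) (hKc : IsCompact K) (hKconv : Convex ℝ K)
    (hKvol : (0:ℝ) < (volume K).toReal)
    (u : E3) (hu : ‖u‖ = 1) (M m : ℝ) (hw : 0 < M - m)
    (hub : ∀ x ∈ K, ⟪x, u⟫ ≤ M) (hlb : ∀ x ∈ K, m ≤ ⟪x, u⟫)
    (hbex : ∃ b ∈ K, ⟪b, u⟫ = M) :
    (M - m) / 4 ≤ ⟪centroid3 K, u⟫ - m := by
  obtain ⟨b, hbK, hbM⟩ := hbex
  set w : ℝ := M - m with hwdef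
  set V : ℝ := (volume K).toReal with hVdef
  have hune : u ≠ 0 := by intro h; rw [h, norm_zero] at hu; norm_num at hu
  have hKm : MeasurableSet K := hKc.isClosed.measurableSet
  have hKfin : volume K ≠ ⊤ := hKc.measure_lt_top.ne
  have hfc : Continuous fun x : E3 => ⟪x, u⟫ := continuous_id.inner continuous_const
  have hInt : IntegrableOn (fun x : E3 => ⟪x, u⟫) K volume :=
    hfc.continuousOn.integrableOn_compact hKc
  have hIntf : Integrable (fun x : E3 => ⟪x, u⟫ - m) (volume.restrict K) :=
    hInt.sub (integrableOn_const hKc.measure_lt_top.ne)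
  have f_nn : 0 ≤ᵐ[volume.restrict K] fun x : E3 => ⟪x, u⟫ - m :=
    (ae_restrict_iff' hKm).2 (ae_of_all _ fun x hx => sub_nonneg.2 (hlb x hx))
  set g : ℝ → ℝ := fun t => (volume ({a : E3 | t < ⟪a, u⟫ - m} ∩ K)).toReal with hgdef
  have hmeas : ∀ t : ℝ, MeasurableSet {a : E3 | t < ⟪a, u⟫ - m} := by
    intro t
    exact measurableSet_lt measurable_const ((hfc.measurable).sub measurable_const)
  have layer : ∫ x in K, (⟪x, u⟫ - m) = ∫ t in Ioi (0:ℝ), g t := by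
    rw [hIntf.integral_eq_integral_meas_lt f_nn]
    refine integral_congr_ae (ae_of_all _ fun t => ?_)
    rw [hgdef]
    simp only
    rw [measureReal_def, Measure.restrict_apply (hmeas t)]
  -- key geometric bound
  have key : ∀ t ∈ Ioc (0:ℝ) w, ((w - t)/w)^3 * V ≤ g t := by
    intro t ht
    obtain ⟨ht0, htw⟩ := ht
    set l : ℝ := (w - t)/w with hldef
    have hwne : w ≠ 0 := ne_of_gt hw
    have hl0 : 0 ≤ l := div_nonneg (by linarith) hw.le
    have hl1 : l ≤ 1 := by rw [hldef, div_le_one hw]; linarith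
    have hlw : l * w = w - t := div_mul_cancel₀ _ hwne
    have himg : (AffineMap.homothety b l) '' K ⊆ {a : E3 | t ≤ ⟪a, u⟫ - m} ∩ K := by
      rintro y ⟨x, hx, rfl⟩
      rw [AffineMap.homothety_apply]
      simp only [vsub_eq_sub, vadd_eq_add]
      constructor
      · simp only [mem_setOf_eq]
        have hcomp : ⟪l • (x - b) + b, u⟫ = l * (⟪x, u⟫ - M) + M := by
          rw [inner_add_left, real_inner_smul_left, inner_sub_left, hbM]
        rw [hcomp]
        have hx1 := hlb x hx
        have hmul : l * (m - M) ≤ l * (⟪x, u⟫ - M) :=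
          mul_le_mul_of_nonneg_left (by linarith) hl0
        have h3 : l * (m - M) = t - w := by
          rw [show m - M = -w by rw [hwdef]; ring, mul_neg, hlw]; ring
        rw [h3] at hmul
        linarith [hwdef ▸ hmul]
      · have hmem := hKconv.add_smul_sub_mem hbK hx ⟨hl0, hl1⟩
        simpa [add_comm] using hmem
    have hfr : Module.finrank ℝ E3 = 3 := finrank_euclideanSpace_fin
    have him : volume ((AffineMap.homothety b l) '' K)
        ≤ volume ({a : E3 | t ≤ ⟪a, u⟫ - m} ∩ K) := measure_mono himg
    rw [MeasureTheory.Measure.addHaar_image_homothety, hfr, abs_of_nonneg (pow_nonneg hl0 3)] at him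
    have hslice : volume ({a : E3 | t ≤ ⟪a, u⟫ - m} ∩ K)
        ≤ volume ({a : E3 | t < ⟪a, u⟫ - m} ∩ K) := by
      have hsub : {a : E3 | t ≤ ⟪a, u⟫ - m} ∩ K ⊆
          ({a : E3 | t < ⟪a, u⟫ - m} ∩ K) ∪ {a : E3 | ⟪a, u⟫ = m + t} := by
        rintro a ⟨ha, haK⟩
        have ha' : t ≤ ⟪a, u⟫ - m := ha
        rcases lt_or_eq_of_le ha' with h | h
        · exact Or.inl ⟨h, haK⟩
        · exact Or.inr (by simp only [mem_setOf_eq]; linarith)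
      calc volume ({a : E3 | t ≤ ⟪a, u⟫ - m} ∩ K)
          ≤ volume (({a : E3 | t < ⟪a, u⟫ - m} ∩ K) ∪ {a : E3 | ⟪a, u⟫ = m + t}) :=
            measure_mono hsub
        _ ≤ volume ({a : E3 | t < ⟪a, u⟫ - m} ∩ K) + volume {a : E3 | ⟪a, u⟫ = m + t} :=
            measure_union_le _ _
        _ = volume ({a : E3 | t < ⟪a, u⟫ - m} ∩ K) := by
            rw [hyperplane_null u hune (m + t), add_zero]
    have hcomb : ENNReal.ofReal (l ^ 3) * volume K
        ≤ volume ({a : E3 | t < ⟪a, u⟫ - m} ∩ K) := le_trans him hslice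
    calc ((w - t)/w)^3 * V = (ENNReal.ofReal (l ^ 3) * volume K).toReal := by
          rw [ENNReal.toReal_mul, ENNReal.toReal_ofReal (by positivity)]
      _ ≤ g t := ENNReal.toReal_mono
          (ne_top_of_le_ne_top hKfin (measure_mono inter_subset_right)) hcomb
  -- g vanishes beyond w
  have hg0 : ∀ t : ℝ, w ≤ t → g t = 0 := by
    intro t hwt
    have : {a : E3 | t < ⟪a, u⟫ - m} ∩ K = ∅ := by
      ext a; simp only [mem_inter_iff, mem_setOf_eq, mem_empty_iff_false, iff_false, not_and]
      intro h ha
      have := hub a ha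
      linarith
    rw [hgdef]; simp only; rw [this]; simp
  have hg_nn : ∀ t, 0 ≤ g t := fun t => ENNReal.toReal_nonneg
  have hg_le : ∀ t, g t ≤ V := by
    intro t
    exact ENNReal.toReal_mono hKfin (measure_mono inter_subset_right)
  have hg_anti : Antitone g := by
    intro s t hst
    exact ENNReal.toReal_mono (ne_top_of_le_ne_top hKfin (measure_mono inter_subset_right))
      (measure_mono (inter_subset_inter_left _ (fun a ha => lt_of_le_of_lt hst ha)))
  have hg_meas : Measurable g := hg_anti.measurable
  have hbnd : Integrable ((Ioc (0:ℝ) w).indicator (fun _ => V)) volume :=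
    (integrable_indicator_iff measurableSet_Ioc).2
      (integrableOn_const (by simp [hw.le]))
  have hg_int : IntegrableOn g (Ioi (0:ℝ)) volume := by
    refine Integrable.mono' hbnd.integrableOn hg_meas.aestronglyMeasurable ?_
    refine (ae_restrict_iff' measurableSet_Ioi).2 (ae_of_all _ fun t ht => ?_)
    rw [Real.norm_of_nonneg (hg_nn t)]
    by_cases h : t ∈ Ioc (0:ℝ) w
    · simp only [indicator_of_mem h]; exact hg_le t
    · simp only [indicator_of_notMem h]
      have hwt : w ≤ t := by
        rcases not_and_or.mp h with h1 | h2
        · exact absurd ht h1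
        · linarith [not_le.mp h2]
      rw [hg0 t hwt]
  set φ : ℝ → ℝ := fun t => (Ioc (0:ℝ) w).indicator (fun s => ((w - s)/w)^3 * V) t with hφdef
  have hφc : Continuous fun s : ℝ => ((w - s)/w)^3 * V := (((continuous_const.sub continuous_id).div_const w).pow 3).mul continuous_const
  have hφ_int : IntegrableOn φ (Ioi (0:ℝ)) volume := by
    refine Integrable.integrableOn ?_
    exact (integrable_indicator_iff measurableSet_Ioc).2 hφc.integrableOn_Ioc
  have hφ_le : ∀ t ∈ Ioi (0:ℝ), φ t ≤ g t := by
    intro t ht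
    by_cases h : t ∈ Ioc (0:ℝ) w
    · simp only [hφdef, indicator_of_mem h]; exact key t h
    · simp only [hφdef, indicator_of_notMem h]; exact hg_nn t
  have hmono : ∫ t in Ioi (0:ℝ), φ t ≤ ∫ t in Ioi (0:ℝ), g t :=
    setIntegral_mono_on hφ_int hg_int measurableSet_Ioi hφ_le
  have hφ_val : ∫ t in Ioi (0:ℝ), φ t = w / 4 * V := by
    have hwne : w ≠ 0 := ne_of_gt hw
    rw [hφdef]
    rw [setIntegral_indicator measurableSet_Ioc,
      inter_eq_self_of_subset_right Ioc_subset_Ioi_self,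
      ← intervalIntegral.integral_of_le hw.le]
    have h1 : ∀ s : ℝ, ((w - s)/w)^3 * V = (w - s)^3 * (V / w^3) := by
      intro s; field_simp
    simp_rw [h1]
    rw [intervalIntegral.integral_mul_const,
      intervalIntegral.integral_comp_sub_left (fun x => x^3) w]
    simp only [sub_self, sub_zero]
    rw [integral_pow]
    field_simp
    ring
  -- assemble
  have hIK : (w / 4) * V ≤ ∫ x in K, (⟪x, u⟫ - m) := by
    rw [layer]; rw [hφ_val] at hmono; exact hmono
  have hsplit : ∫ x in K, (⟪x, u⟫ - m) = (∫ x in K, ⟪x, u⟫) - m * V := by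
    rw [integral_sub hInt (integrableOn_const hKc.measure_lt_top.ne)]
    rw [setIntegral_const, measureReal_def]
    rw [smul_eq_mul]
    ring
  have hcent : ⟪centroid3 K, u⟫ = V⁻¹ * ∫ x in K, ⟪x, u⟫ := by
    rw [centroid3, real_inner_smul_left]
    congr 1
    have hid : Integrable (fun x : E3 => x) (volume.restrict K) :=
      continuous_id.continuousOn.integrableOn_compact hKc
    rw [real_inner_comm, ← integral_inner hid u]
    exact integral_congr_ae (ae_of_all _ fun x => real_inner_comm x u)
  rw [hcent]
  rw [hsplit] at hIK
  rw [inv_mul_eq_div, le_sub_iff_add_le, le_div_iff₀ hKvol]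
  nlinarith [hIK]


/-- The centroid of a convex body in `ℝ³` is at distance at least a
quarter of the width from each of the two supporting planes orthogonal to a given
unit vector. -/
theorem centroid_quarter_width (K : Set E3) (hK : IsConvexBody3 K)
    (u : E3) (hu : ‖u‖ = 1) (M m : ℝ)
    (hM : M = sSup {t : ℝ | ∃ x ∈ K, t = ⟪x, u⟫})
    (hm : m = sInf {t : ℝ | ∃ x ∈ K, t = ⟪x, u⟫}) :
    (M - m) / 4 ≤ M - ⟪centroid3 K, u⟫ ∧ (M - m) / 4 ≤ ⟪centroid3 K, u⟫ - m := by
  obtain ⟨hKc, hKconv, hKint⟩ := hK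
  have hKne : K.Nonempty := hKint.mono interior_subset
  have hSeq : {t : ℝ | ∃ x ∈ K, t = ⟪x, u⟫} = (fun x : E3 => ⟪x, u⟫) '' K := by
    ext t; simp [Set.mem_image, eq_comm]
  have hfc : Continuous fun x : E3 => ⟪x, u⟫ := continuous_id.inner continuous_const
  have hSc : IsCompact ((fun x : E3 => ⟪x, u⟫) '' K) := hKc.image hfc
  have hSne : ((fun x : E3 => ⟪x, u⟫) '' K).Nonempty := hKne.image _
  rw [hSeq] at hM hm
  have hub : ∀ x ∈ K, ⟪x, u⟫ ≤ M := fun x hx =>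
    hM ▸ le_csSup hSc.bddAbove (mem_image_of_mem _ hx)
  have hlb : ∀ x ∈ K, m ≤ ⟪x, u⟫ := fun x hx =>
    hm ▸ csInf_le hSc.bddBelow (mem_image_of_mem _ hx)
  have hMmem : ∃ b ∈ K, ⟪b, u⟫ = M := by
    have := hSc.sSup_mem hSne
    rw [← hM] at this
    obtain ⟨b, hbK, hbM⟩ := this
    exact ⟨b, hbK, hbM⟩
  have hmmem : ∃ a ∈ K, ⟪a, u⟫ = m := by
    have := hSc.sInf_mem hSne
    rw [← hm] at this
    obtain ⟨a, haK, ham⟩ := this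
    exact ⟨a, haK, ham⟩
  have huu : ⟪u, u⟫ = 1 := by
    rw [real_inner_self_eq_norm_mul_norm, hu]; norm_num
  have hw : 0 < M - m := by
    obtain ⟨x₀, hx₀⟩ := hKint
    obtain ⟨ε, hε, hball⟩ := Metric.isOpen_iff.mp isOpen_interior x₀ hx₀
    have hmem : ∀ c : ℝ, |c| < ε → x₀ + c • u ∈ K := by
      intro c hc
      refine interior_subset (hball ?_)
      rw [Metric.mem_ball, dist_eq_norm]
      simpa [norm_smul, hu] using hc
    have h1 : x₀ + (ε/2) • u ∈ K := hmem _ (by rw [abs_of_pos (by linarith)]; linarith)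
    have h2 : x₀ + (-(ε/2)) • u ∈ K := hmem _ (by rw [abs_of_neg (by linarith)]; linarith)
    have e1 : ⟪x₀ + (ε/2) • u, u⟫ = ⟪x₀, u⟫ + ε/2 := by
      rw [inner_add_left, real_inner_smul_left, huu]; ring
    have e2 : ⟪x₀ + (-(ε/2)) • u, u⟫ = ⟪x₀, u⟫ - ε/2 := by
      rw [inner_add_left, real_inner_smul_left, huu]; ring
    have := hub _ h1
    have := hlb _ h2
    rw [e1] at *; rw [e2] at *
    linarith
  have hKvol : (0:ℝ) < (volume K).toReal :=
    ENNReal.toReal_pos ((MeasureTheory.Measure.measure_pos_of_nonempty_interior volume hKint)).ne' hKc.measure_lt_top.ne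
  constructor
  · -- upper side via -u
    have hu' : ‖-u‖ = 1 := by rw [norm_neg]; exact hu
    have hub' : ∀ x ∈ K, ⟪x, -u⟫ ≤ -m := by
      intro x hx; rw [inner_neg_right]; linarith [hlb x hx]
    have hlb' : ∀ x ∈ K, -M ≤ ⟪x, -u⟫ := by
      intro x hx; rw [inner_neg_right]; linarith [hub x hx]
    have hbex' : ∃ b ∈ K, ⟪b, -u⟫ = -m := by
      obtain ⟨a, haK, ham⟩ := hmmem
      exact ⟨a, haK, by rw [inner_neg_right, ham]⟩
    have := aux_lower K hKc hKconv hKvol (-u) hu' (-m) (-M)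
      (by linarith) hub' hlb' hbex'
    rw [inner_neg_right] at this
    linarith
  · exact aux_lower K hKc hKconv hKvol u hu M m hw hub hlb hMmem


end
end
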